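/- arXiv:2603.09372 — 2 statements merged into one kernel-verified Lean document; each statement's English description precedes it below -/
import Mathlib

section
/- For every n ∈ ℕ and y ∈ ℝ, ∫_ℝ e^{ixy} H_n(x) e^{-x²} dx = √π (iy)^n e^{-y²/4}, where H_n is the n-th (physicists') Hermite polynomial. -/
/-!
Since `H_{n+1}(x) e^{-x²} = -(H_n(x) e^{-x²})'`, integrating by parts against `e^{ixy}` multiplies
the integral by `iy` at each step; for `n = 0` it is the Fourier transform of the Gaussian.
-/

open MeasureTheory Polynomial

/-- The physicists' Hermite polynomials, defined by the recursion
`H₀ = 1`, `H_{n+1}(x) = 2x·H_n(x) − H_n'(x)`, equivalent to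
`H_n(x) = (−1)ⁿ e^{x²} dⁿ/dxⁿ e^{−x²}`. -/
noncomputable def physHermite : ℕ → Polynomial ℝ
  | 0 => 1
  | n + 1 => 2 * Polynomial.X * physHermite n - (physHermite n).derivative

open Complex

lemma integrable_eval_mul_exp_neg_mul_sq {b : ℝ} (hb : 0 < b) (p : ℝ[X]) :
    Integrable fun x : ℝ => p.eval x * Real.exp (-b * x ^ 2) := by
  induction p using Polynomial.induction_on' with
  | add p q hp hq => simpa only [eval_add, add_mul, Pi.add_def] using hp.add hq
  | monomial n a =>
    have hn : (-1 : ℝ) < n := by linarith [n.cast_nonneg (α := ℝ)]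
    simpa [Real.rpow_natCast, mul_assoc] using
      (integrable_rpow_mul_exp_neg_mul_sq hb hn).const_mul a

lemma integrable_cexp_mul_of_integrable {f : ℝ → ℂ} (hf : Integrable f) (y : ℝ) :
    Integrable fun x : ℝ => cexp (I * x * y) * f x :=
  hf.bdd_mul (by fun_prop) (.of_forall fun x => by
    rw [mul_assoc, ← ofReal_mul, norm_exp_I_mul_ofReal])

-- Integration by parts: the boundary terms vanish since `v` is integrable and `|e^{ixy}| = 1`.
lemma integral_cexp_mul_deriv {v v' : ℝ → ℂ} (hv : ∀ x, HasDerivAt v (v' x) x)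
    (hv_int : Integrable v) (hv'_int : Integrable v') (y : ℝ) :
    ∫ x : ℝ, cexp (I * x * y) * v' x = -(I * y) * ∫ x : ℝ, cexp (I * x * y) * v x := by
  have hu (x : ℝ) :
      HasDerivAt (fun x : ℝ => cexp (I * x * y)) (I * y * cexp (I * x * y)) x := by
    simpa [mul_comm] using
      (((hasDerivAt_id (x : ℂ)).const_mul I).mul_const (y : ℂ)).cexp.comp_ofReal
  have huv := integrable_cexp_mul_of_integrable hv_int y
  have hu'v : Integrable fun x : ℝ => I * y * cexp (I * x * y) * v x := by
    simpa only [mul_assoc] using huv.const_mul (I * y)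
  rw [integral_mul_deriv_eq_deriv_mul_of_integrable (fun x _ => hu x) (fun x _ => hv x)
    (integrable_cexp_mul_of_integrable hv'_int y) hu'v huv, ← integral_const_mul,
    ← integral_neg]
  congr 1
  funext x
  ring

lemma hasDerivAt_eval_physHermite_mul_exp_neg_sq (n : ℕ) (x : ℝ) :
    HasDerivAt (fun x : ℝ => (physHermite n).eval x * Real.exp (-x ^ 2))
      (-((physHermite (n + 1)).eval x * Real.exp (-x ^ 2))) x := by
  have hexp : HasDerivAt (fun x : ℝ => Real.exp (-x ^ 2)) (Real.exp (-x ^ 2) * -(2 * x)) x := by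
    simpa using (hasDerivAt_pow 2 x).neg.exp
  refine (((physHermite n).hasDerivAt x).mul hexp).congr_deriv ?_
  simp only [physHermite, eval_sub, eval_mul, eval_ofNat, eval_X]
  ring

lemma integral_cexp_mul_exp_neg_sq (y : ℝ) :
    ∫ x : ℝ, cexp (I * x * y) * (Real.exp (-x ^ 2) : ℝ) =
      Real.sqrt Real.pi * cexp (-(y : ℂ) ^ 2 / 4) := by
  convert fourierIntegral_gaussian (b := 1) (by norm_num) (y : ℂ) using 1
  · congr 1
    funext x
    push_cast
    ring_nf
  · rw [div_one, mul_one, Real.sqrt_eq_rpow, ofReal_cpow Real.pi_nonneg]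
    norm_num

lemma integral_cexp_mul_physHermite_succ_mul_exp_neg_sq (n : ℕ) (y : ℝ) :
    ∫ x : ℝ, cexp (I * x * y) * ((physHermite (n + 1)).eval x * Real.exp (-x ^ 2) : ℝ) =
      I * y * ∫ x : ℝ, cexp (I * x * y) * ((physHermite n).eval x * Real.exp (-x ^ 2) : ℝ) := by
  have hint (m : ℕ) :
      Integrable fun x : ℝ => (((physHermite m).eval x * Real.exp (-x ^ 2) : ℝ) : ℂ) := by
    simpa using (integrable_eval_mul_exp_neg_mul_sq one_pos (physHermite m)).ofReal (𝕜 := ℂ)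
  have ibp := integral_cexp_mul_deriv
    (fun x => (hasDerivAt_eval_physHermite_mul_exp_neg_sq n x).ofReal_comp) (hint n)
    (by simpa using (hint (n + 1)).neg) y
  simpa only [ofReal_neg, mul_neg, integral_neg, neg_mul, neg_inj] using ibp

/-- For every `n ∈ ℕ` and `y ∈ ℝ`,
`∫_ℝ e^{ixy} H_n(x) e^{-x²} dx = √π (iy)^n e^{-y²/4}`. -/
theorem integral_exp_mul_hermite_mul_gaussian (n : ℕ) (y : ℝ) :
    ∫ x : ℝ, Complex.exp (Complex.I * x * y) * ((physHermite n).eval x : ℝ) *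
        (Real.exp (-x ^ 2) : ℝ)
      = (Real.sqrt Real.pi : ℝ) * (Complex.I * y) ^ n *
        Complex.exp (-(y : ℂ) ^ 2 / 4) := by
  simp only [mul_assoc (cexp _), ← ofReal_mul]
  induction n with
  | zero => simpa [physHermite] using integral_cexp_mul_exp_neg_sq y
  | succ n ih =>
    rw [integral_cexp_mul_physHermite_succ_mul_exp_neg_sq, ih]
    ring
end

section
/- Let λ > 0, μ ≥ 0, ε ≥ 0 with λ + μ > 0, and let n₀ = ⌊μ/ω⌋ for ω > 0. Then for every n ∈ ℕ₀ with n ≤ n₀ and every r > 0, the quantity |(1/(4πr)) · (e^{i√(μ - ωn + iε)·r} − e^{−√λ·r})/(λ + μ − ωn + iε)| is bounded by a constant c depending only on λ, μ, ω (uniformly in r > 0, ε ∈ (0,1], and n ≤ n₀), where √(μ - ωn + iε) denotes the branch with positive imaginary part. -/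
/-!
On the closed left half-plane `exp` is `1`-Lipschitz, and both exponents `i √z r` and `-√λ r`
lie there because the principal square root of `z` with `Im z > 0` has `Im √z ≥ 0`. Hence the
numerator is at most `r (|√z| + √λ)`, which cancels the factor `1 / r`; the denominator has
real part at least `λ`, and `|z| ≤ μ + 1` for `n ≤ ⌊μ/ω⌋` and `ε ≤ 1`.
-/

open Complex

theorem Complex.norm_exp_sub_exp_le_of_re_nonpos {a b : ℂ} (ha : a.re ≤ 0) (hb : b.re ≤ 0) :
    ‖exp a - exp b‖ ≤ ‖a - b‖ := by
  have hexp : ∀ z ∈ {z : ℂ | z.re ≤ 0}, ‖deriv exp z‖ ≤ 1 := fun z hz => by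
    rw [Complex.deriv_exp, norm_exp]
    exact Real.exp_le_one_iff.mpr hz
  simpa using (convex_halfSpace_re_le 0).norm_image_sub_le_of_norm_deriv_le
    (fun z _ => differentiableAt_exp) hexp hb ha

theorem Complex.norm_exp_I_mul_sub_exp_neg_le {w : ℂ} (hw : 0 ≤ w.im) {a r : ℝ} (ha : 0 ≤ a)
    (hr : 0 ≤ r) : ‖exp (I * w * r) - exp (-a * r)‖ ≤ r * (‖w‖ + a) := by
  have hre₁ : (I * w * r).re ≤ 0 := by simpa using mul_nonneg hw hr
  have hre₂ : (-(a : ℂ) * r).re ≤ 0 := by simpa using mul_nonneg ha hr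
  calc ‖exp (I * w * r) - exp (-a * r)‖ ≤ ‖I * w * r - -a * r‖ :=
        norm_exp_sub_exp_le_of_re_nonpos hre₁ hre₂
    _ = r * ‖I * w + a‖ := by
        rw [show I * w * r - -a * r = (I * w + a) * r by ring, norm_mul, norm_real,
          Real.norm_of_nonneg hr, mul_comm]
    _ ≤ r * (‖w‖ + a) := by
        gcongr
        simpa [Real.norm_of_nonneg ha] using norm_add_le (I * w) a

theorem Complex.im_cpow_one_div_two_nonneg {z : ℂ} (hz : 0 ≤ z.im) :
    0 ≤ (z ^ ((1 : ℂ) / 2)).im := by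
  rw [one_div, cpow_inv_two_im_eq_sqrt hz]
  exact Real.sqrt_nonneg _

theorem Complex.norm_cpow_one_div_two (z : ℂ) : ‖z ^ ((1 : ℂ) / 2)‖ = √‖z‖ := by
  rw [Real.sqrt_eq_rpow, ← norm_cpow_real]
  norm_num

theorem norm_kernel_factor_le {w D : ℂ} (hw : 0 ≤ w.im) {a r d : ℝ} (ha : 0 ≤ a) (hr : 0 < r)
    (hd : 0 < d) (hD : d ≤ ‖D‖) :
    ‖(1 / (4 * Real.pi * r)) * ((exp (I * w * r) - exp (-a * r)) / D)‖ ≤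
      (‖w‖ + a) / (4 * Real.pi * d) := by
  have hnum := norm_exp_I_mul_sub_exp_neg_le hw ha hr.le
  have hpi := Real.pi_pos
  rw [norm_mul, norm_div, norm_div, norm_one, show (4 * Real.pi * r : ℂ) = (4 * Real.pi * r : ℝ)
    by push_cast; ring, norm_real, Real.norm_of_nonneg (by positivity)]
  calc 1 / (4 * Real.pi * r) * (‖exp (I * w * r) - exp (-a * r)‖ / ‖D‖)
      ≤ 1 / (4 * Real.pi * r) * (r * (‖w‖ + a) / d) := by gcongr
    _ = (‖w‖ + a) / (4 * Real.pi * d) := by field_simp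

/-- Uniform bound on the low-energy kernel factor: for `λ, ω > 0`, `μ ≥ 0`,
there is a constant `c` (depending only on `λ, μ, ω`) such that for all
`n ≤ n₀ = ⌊μ/ω⌋`, all `r > 0` and all `ε ∈ (0,1]`,
`|(1/(4πr)) (e^{i√(μ-ωn+iε) r} − e^{−√λ r})/(λ+μ−ωn+iε)| ≤ c`,
where the square root is the principal branch (positive imaginary part on the
upper half-plane). -/
theorem kernel_factor_uniform_bound
    (lam om mu : ℝ) (hlam : 0 < lam) (hom : 0 < om) (hmu : 0 ≤ mu) :
    ∃ c : ℝ, ∀ n : ℕ, n ≤ Nat.floor (mu / om) → ∀ r : ℝ, 0 < r →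
      ∀ ε : ℝ, ε ∈ Set.Ioc (0 : ℝ) 1 →
      ‖(1 / (4 * Real.pi * r)) *
        ((Complex.exp (Complex.I *
            (((mu : ℂ) - om * n + ε * Complex.I) ^ ((1 : ℂ) / 2)) * r) -
          Complex.exp (-(Real.sqrt lam : ℝ) * r)) /
          ((lam : ℂ) + mu - om * n + ε * Complex.I))‖ ≤ c := by
  refine ⟨(√(mu + 1) + √lam) / (4 * Real.pi * lam), fun n hn r hr ε ⟨hε₀, hε₁⟩ => ?_⟩
  have hn' : om * n ≤ mu := by
    rwa [Nat.le_floor_iff (by positivity), le_div_iff₀ hom, mul_comm] at hn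
  have hz : ‖(mu : ℂ) - om * n + ε * I‖ ≤ mu + 1 := by
    refine (norm_le_abs_re_add_abs_im _).trans ?_
    simp only [sub_re, add_re, sub_im, add_im, ofReal_re, ofReal_im, mul_re, mul_im, I_re, I_im,
      natCast_re, natCast_im]
    rw [abs_of_nonneg (by linarith), abs_of_pos (by linarith)]
    linarith [mul_nonneg hom.le n.cast_nonneg]
  have hD : lam ≤ ‖(lam : ℂ) + mu - om * n + ε * I‖ := by
    refine le_trans ?_ (re_le_norm _)
    simp only [add_re, sub_re, ofReal_re, mul_re, natCast_re, ofReal_im, natCast_im, I_re, I_im]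
    linarith
  refine (norm_kernel_factor_le (im_cpow_one_div_two_nonneg (by simpa using hε₀.le))
    (Real.sqrt_nonneg lam) hr hlam hD).trans ?_
  rw [norm_cpow_one_div_two]
  gcongr
end
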